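/- Second moment bound for the normalized LQG measure: for γ < √2, there is a constant C = C(γ) such that for every integer m and every box B of side length 2^m in ℤ_n², the normalized mass η̃_n(B) = η_n(B)/E[η_n(B)] satisfies E[η̃_n(B)²] ≤ C·max(2^{−γ² m}, 1), where η_n(B) = ∑_{y∈B} e^{γ φ_n(y)} and φ_n is the white-noise regularized GFF at scale 2^{−n}. -/

import Mathlib

open MeasureTheory Finset

/-!
Expanding the square, `E[η_n(B)²] = 2^{γ²n} ∑_{y,y' ∈ B} e^{γ² K(y,y')}`. The covariance bound gives
`e^{γ² K(y,y')} ≤ e^{γ²} (|y - y'|^{-γ²} + 1)` off the diagonal, and on it `2^{γ²n} ≤ ε^{-γ²}` for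
the mesh `ε = 2^{-n}/ζ`. Writing `y - y' = ε δ` with `δ ∈ ℤ²`, the inequality
`|δ|² ≥ max(|δ₁|,1) · max(|δ₂|,1)` dominates `|y - y'|^{-γ²}` by `ε^{-γ²}` times a product of the
one-dimensional kernels `max(|δᵢ|,1)^{-γ²/2}`. As `γ²/2 < 1`, the double sum of such a kernel over a
side of `N` points is `O(N^{2-γ²/2})`, and since `εN ≥ 2^m/2` the whole sum is
`O(max(2^{-γ² m}, 1) |B|²)`.
-/

/-- Position in `ℝ²` of the point of the rescaled lattice
`ℤ_n² = 2^{-n} ζ^{-1} ℤ²` indexed by `q ∈ ℤ²`. -/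
noncomputable def latticePos (n ζ : ℕ) (q : ℤ × ℤ) : ℝ × ℝ :=
  ((q.1 : ℝ) * ((2 : ℝ) ^ (-(n : ℤ)) / (ζ : ℝ)),
   (q.2 : ℝ) * ((2 : ℝ) ^ (-(n : ℤ)) / (ζ : ℝ)))

noncomputable def latticeDist (n ζ : ℕ) (q q' : ℤ × ℤ) : ℝ :=
  Real.sqrt (((latticePos n ζ q).1 - (latticePos n ζ q').1) ^ 2 +
    ((latticePos n ζ q).2 - (latticePos n ζ q').2) ^ 2)

noncomputable def powerKernel (α : ℝ) (δ : ℤ) : ℝ := ((max |δ| 1 : ℤ) : ℝ) ^ (-α)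

section PowerKernel

variable {α : ℝ}

lemma powerKernel_nonneg (α : ℝ) (δ : ℤ) : 0 ≤ powerKernel α δ :=
  Real.rpow_nonneg (by positivity) _

@[simp]
lemma powerKernel_zero (α : ℝ) : powerKernel α 0 = 1 := by simp [powerKernel]

lemma powerKernel_natCast_add_one (α : ℝ) (k : ℕ) :
    powerKernel α ((k : ℤ) + 1) = ((k : ℝ) + 1) ^ (-α) := by
  rw [powerKernel, abs_of_pos (by omega), max_eq_left (by omega)]
  push_cast; rfl

lemma powerKernel_neg (α : ℝ) (δ : ℤ) : powerKernel α (-δ) = powerKernel α δ := by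
  rw [powerKernel, abs_neg, powerKernel]

/-- Bernoulli's inequality `(1 - 1/x) ^ (1 - α) ≤ 1 - (1 - α) / x`, multiplied by `x ^ (1 - α)`. -/
lemma one_sub_mul_rpow_neg_le_rpow_sub_rpow (hα0 : 0 ≤ α) (hα1 : α ≤ 1) {x : ℝ} (hx : 1 ≤ x) :
    (1 - α) * x ^ (-α) ≤ x ^ (1 - α) - (x - 1) ^ (1 - α) := by
  have hx0 : 0 < x := by linarith
  have hbern : (1 + -x⁻¹) ^ (1 - α) ≤ 1 + (1 - α) * -x⁻¹ :=
    rpow_one_add_le_one_add_mul_self (by linarith [inv_le_one_of_one_le₀ hx]) (by linarith)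
      (by linarith)
  have hsub : (x - 1) ^ (1 - α) = x ^ (1 - α) * (1 + -x⁻¹) ^ (1 - α) := by
    rw [← Real.mul_rpow hx0.le (by linarith [inv_le_one_of_one_le₀ hx])]
    field_simp
    ring_nf
  have hneg : x ^ (-α) = x ^ (1 - α) * x⁻¹ := by
    rw [← div_eq_mul_inv, ← Real.rpow_sub_one hx0.ne']
    ring_nf
  have := mul_le_mul_of_nonneg_left hbern (Real.rpow_nonneg hx0.le (1 - α))
  rw [hsub, hneg]
  linarith

lemma sum_powerKernel_Icc_neg_le (hα0 : 0 ≤ α) (hα1 : α < 1) (D : ℕ) :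
    ∑ δ ∈ Icc (-(D : ℤ)) D, powerKernel α δ ≤ 1 + 2 * ((D : ℝ) ^ (1 - α) / (1 - α)) := by
  induction D with
  | zero => simp [Real.zero_rpow (by linarith : 1 - α ≠ 0)]
  | succ D ih =>
    have hIcc : Icc (-((D + 1 : ℕ) : ℤ)) (D + 1 : ℕ)
        = insert (-((D : ℤ) + 1)) (insert ((D : ℤ) + 1) (Icc (-(D : ℤ)) D)) := by
      ext δ; simp only [mem_Icc, mem_insert]; omega
    have hstep := one_sub_mul_rpow_neg_le_rpow_sub_rpow hα0 hα1.le
      (by linarith [D.cast_nonneg (α := ℝ)] : (1 : ℝ) ≤ D + 1)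
    rw [add_sub_cancel_right, ← le_div_iff₀' (by linarith), sub_div] at hstep
    rw [hIcc, sum_insert (by simp; omega), sum_insert (by simp), powerKernel_neg,
      powerKernel_natCast_add_one]
    push_cast
    linarith

lemma sum_powerKernel_sub_le (hα0 : 0 ≤ α) (hα1 : α < 1) {c d j : ℤ} (hj : j ∈ Icc c d) :
    ∑ j' ∈ Icc c d, powerKernel α (j - j') ≤ (1 + 2 / (1 - α)) * (#(Icc c d) : ℝ) ^ (1 - α) := by
  rw [mem_Icc] at hj
  obtain ⟨D, hD⟩ : ∃ D : ℕ, (D : ℤ) = d - c := ⟨(d - c).toNat, by omega⟩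
  have hcard : (#(Icc c d) : ℝ) = D + 1 := by
    rw [Int.card_Icc]; exact_mod_cast (by omega : ((d + 1 - c).toNat : ℤ) = D + 1)
  have hD1 : (D : ℝ) ^ (1 - α) ≤ ((D : ℝ) + 1) ^ (1 - α) :=
    Real.rpow_le_rpow D.cast_nonneg (by linarith) (by linarith)
  have h1 : (1 : ℝ) ≤ ((D : ℝ) + 1) ^ (1 - α) :=
    Real.one_le_rpow (by linarith [D.cast_nonneg (α := ℝ)]) (by linarith)
  have h2 := div_le_div_of_nonneg_right hD1 (by linarith : 0 ≤ 1 - α)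
  calc ∑ j' ∈ Icc c d, powerKernel α (j - j')
      = ∑ δ ∈ (Icc c d).image (j - ·), powerKernel α δ :=
        (sum_image fun _ _ _ _ h => sub_right_injective h).symm
    _ ≤ ∑ δ ∈ Icc (-(D : ℤ)) D, powerKernel α δ :=
        sum_le_sum_of_subset_of_nonneg
          (fun δ => by simp only [mem_image, mem_Icc]; omega)
          fun δ _ _ => powerKernel_nonneg α δ
    _ ≤ 1 + 2 * ((D : ℝ) ^ (1 - α) / (1 - α)) := sum_powerKernel_Icc_neg_le hα0 hα1 D
    _ ≤ (1 + 2 / (1 - α)) * (#(Icc c d) : ℝ) ^ (1 - α) := by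
        rw [hcard, add_mul, mul_comm_div, one_mul]
        linarith

end PowerKernel

lemma sub_sub_one_lt_card_Icc_ceil_floor (u v : ℝ) : v - u - 1 < #(Icc ⌈u⌉ ⌊v⌋) := by
  have hcard : ((⌊v⌋ + 1 - ⌈u⌉ : ℤ) : ℝ) ≤ #(Icc ⌈u⌉ ⌊v⌋) := by
    rw [Int.card_Icc]; exact_mod_cast Int.self_le_toNat _
  push_cast at hcard
  linarith [Int.lt_floor_add_one v, Int.ceil_lt_add_one u]

noncomputable def latticeInterval (ε u L : ℝ) : Finset ℤ := Icc ⌈u / ε⌉ ⌊(u + L) / ε⌋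

lemma mem_latticeInterval {ε u L : ℝ} (hε : 0 < ε) {x : ℤ} :
    x ∈ latticeInterval ε u L ↔ (x : ℝ) * ε ∈ Set.Icc u (u + L) := by
  rw [latticeInterval, mem_Icc, Int.ceil_le, Int.le_floor, div_le_iff₀ hε, le_div_iff₀ hε,
    Set.mem_Icc]

lemma rpow_neg_mul_sum_sum_powerKernel_le {α ε L : ℝ} (hα0 : 0 ≤ α) (hα1 : α < 1) (hε : 0 < ε)
    (hL : 0 < L) (u : ℝ) :
    ε ^ (-α) * ∑ j ∈ latticeInterval ε u L, ∑ j' ∈ latticeInterval ε u L, powerKernel α (j - j')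
      ≤ (1 + 2 / (1 - α)) * (L / 2) ^ (-α) * (#(latticeInterval ε u L) : ℝ) ^ 2 := by
  have hα : 0 < 1 - α := by linarith
  set I := latticeInterval ε u L
  rcases I.eq_empty_or_nonempty with hI | hI
  · simp only [hI, sum_empty, mul_zero]
    positivity
  set N : ℝ := (#I : ℝ)
  have hN1 : 1 ≤ N := Nat.one_le_cast.2 hI.card_pos
  have hN : L / 2 ≤ ε * N := by
    have : (u + L) / ε - u / ε - 1 < N := sub_sub_one_lt_card_Icc_ceil_floor _ _
    rw [← sub_div, add_sub_cancel_left, div_sub_one hε.ne', div_lt_iff₀ hε, mul_comm] at this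
    linarith [le_mul_of_one_le_right hε.le hN1]
  have hεN : (ε * N) ^ (-α) ≤ (L / 2) ^ (-α) :=
    Real.rpow_le_rpow_of_nonpos (by positivity) hN (by linarith)
  have hsum : ∑ j ∈ I, ∑ j' ∈ I, powerKernel α (j - j') ≤ N * ((1 + 2 / (1 - α)) * N ^ (1 - α)) :=
    (sum_le_card_nsmul _ _ _ fun j hj => sum_powerKernel_sub_le hα0 hα1 hj).trans_eq
      (nsmul_eq_mul _ _)
  have hsplit : ε ^ (-α) * (N * ((1 + 2 / (1 - α)) * N ^ (1 - α)))
      = (1 + 2 / (1 - α)) * (ε * N) ^ (-α) * N ^ 2 := by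
    rw [Real.mul_rpow hε.le (by linarith), sub_eq_add_neg, Real.rpow_add (by linarith),
      Real.rpow_one]
    ring
  calc ε ^ (-α) * ∑ j ∈ I, ∑ j' ∈ I, powerKernel α (j - j')
      ≤ ε ^ (-α) * (N * ((1 + 2 / (1 - α)) * N ^ (1 - α))) := by gcongr
    _ = (1 + 2 / (1 - α)) * (ε * N) ^ (-α) * N ^ 2 := hsplit
    _ ≤ (1 + 2 / (1 - α)) * (L / 2) ^ (-α) * N ^ 2 := by gcongr

lemma max_mul_max_one_le_sq_add_sq {x y : ℤ} (hx : 0 ≤ x) (hy : 0 ≤ y) (hxy : 1 ≤ x + y) :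
    max x 1 * max y 1 ≤ x ^ 2 + y ^ 2 := by
  obtain rfl | hx1 : x = 0 ∨ 1 ≤ x := by omega
  · rw [max_eq_right zero_le_one, max_eq_left (by omega)]; nlinarith
  obtain rfl | hy1 : y = 0 ∨ 1 ≤ y := by omega
  · rw [max_eq_left hx1, max_eq_right zero_le_one]; nlinarith
  rw [max_eq_left hx1, max_eq_left hy1]; nlinarith

noncomputable def latticeSpacing (n ζ : ℕ) : ℝ := (2 : ℝ) ^ (-(n : ℤ)) / ζ

section Lattice

variable {n ζ : ℕ}

lemma latticeSpacing_pos (hζ : 0 < ζ) : 0 < latticeSpacing n ζ := by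
  unfold latticeSpacing; positivity

lemma eq_latticeInterval_prod (hζ : 0 < ζ) {L : ℝ} {a : ℝ × ℝ} {B : Finset (ℤ × ℤ)}
    (hB : ∀ q : ℤ × ℤ, q ∈ B ↔ ((latticePos n ζ q).1 ∈ Set.Icc a.1 (a.1 + L) ∧
      (latticePos n ζ q).2 ∈ Set.Icc a.2 (a.2 + L))) :
    B = latticeInterval (latticeSpacing n ζ) a.1 L ×ˢ
      latticeInterval (latticeSpacing n ζ) a.2 L := by
  ext q
  rw [hB, mem_product, mem_latticeInterval (latticeSpacing_pos hζ),
    mem_latticeInterval (latticeSpacing_pos hζ)]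
  rfl

lemma latticeSpacing_sq_mul_le_latticeDist_sq {q q' : ℤ × ℤ} (hne : q ≠ q') :
    latticeSpacing n ζ ^ 2 * (((max |q.1 - q'.1| 1 : ℤ) : ℝ) * ((max |q.2 - q'.2| 1 : ℤ) : ℝ))
      ≤ latticeDist n ζ q q' ^ 2 := by
  have hΔ : 1 ≤ |q.1 - q'.1| + |q.2 - q'.2| := by
    rcases not_and_or.1 (mt Prod.ext_iff.2 hne) with h | h
    · linarith [Int.one_le_abs (sub_ne_zero.2 h), abs_nonneg (q.2 - q'.2)]
    · linarith [Int.one_le_abs (sub_ne_zero.2 h), abs_nonneg (q.1 - q'.1)]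
  have hmax := max_mul_max_one_le_sq_add_sq (abs_nonneg _) (abs_nonneg _) hΔ
  rw [sq_abs, sq_abs] at hmax
  have hmaxR : ((max |q.1 - q'.1| 1 : ℤ) : ℝ) * ((max |q.2 - q'.2| 1 : ℤ) : ℝ)
      ≤ ((q.1 - q'.1 : ℤ) : ℝ) ^ 2 + ((q.2 - q'.2 : ℤ) : ℝ) ^ 2 := by exact_mod_cast hmax
  have hdist : latticeDist n ζ q q' ^ 2
      = latticeSpacing n ζ ^ 2 * (((q.1 - q'.1 : ℤ) : ℝ) ^ 2 + ((q.2 - q'.2 : ℤ) : ℝ) ^ 2) := by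
    rw [latticeDist, Real.sq_sqrt (by positivity), latticeSpacing, latticePos, latticePos]
    push_cast
    ring
  rw [hdist]
  gcongr

lemma latticeDist_pos (hζ : 0 < ζ) {q q' : ℤ × ℤ} (hne : q ≠ q') : 0 < latticeDist n ζ q q' := by
  have h := latticeSpacing_sq_mul_le_latticeDist_sq (n := n) (ζ := ζ) hne
  have hpos : 0 < latticeSpacing n ζ ^ 2 * (((max |q.1 - q'.1| 1 : ℤ) : ℝ) *
      ((max |q.2 - q'.2| 1 : ℤ) : ℝ)) := by
    have := latticeSpacing_pos (n := n) hζ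
    positivity
  exact (Real.sqrt_nonneg _).lt_of_ne' fun h0 => by
    rw [latticeDist, h0] at h
    linarith

lemma latticeDist_rpow_neg_le {β : ℝ} (hβ : 0 ≤ β) (hζ : 0 < ζ) {q q' : ℤ × ℤ} (hne : q ≠ q') :
    latticeDist n ζ q q' ^ (-β) ≤ latticeSpacing n ζ ^ (-β) *
      (powerKernel (β / 2) (q.1 - q'.1) * powerKernel (β / 2) (q.2 - q'.2)) := by
  have hsq : ∀ x : ℝ, 0 ≤ x → x ^ (-β) = (x ^ 2) ^ (-(β / 2)) := fun x hx => by
    rw [← Real.rpow_natCast, ← Real.rpow_mul hx]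
    ring_nf
  have hM₁ : (1 : ℝ) ≤ ((max |q.1 - q'.1| 1 : ℤ) : ℝ) := by exact_mod_cast le_max_right _ _
  have hM₂ : (1 : ℝ) ≤ ((max |q.2 - q'.2| 1 : ℤ) : ℝ) := by exact_mod_cast le_max_right _ _
  have hε := latticeSpacing_pos (n := n) hζ
  rw [hsq _ (latticeDist_pos hζ hne).le, hsq _ hε.le, powerKernel, powerKernel,
    ← Real.mul_rpow (by linarith) (by linarith), ← Real.mul_rpow (by positivity) (by positivity)]
  exact Real.rpow_le_rpow_of_nonpos (by positivity) (latticeSpacing_sq_mul_le_latticeDist_sq hne)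
    (by linarith)

lemma exp_mul_log_two_le_latticeSpacing_rpow {β : ℝ} (hβ : 0 ≤ β) (hζ : 0 < ζ) :
    Real.exp (β * (n * Real.log 2)) ≤ latticeSpacing n ζ ^ (-β) := by
  have hle : latticeSpacing n ζ ≤ 2 ^ (-(n : ℤ)) :=
    div_le_self (by positivity) (by exact_mod_cast hζ)
  calc Real.exp (β * (n * Real.log 2)) = ((2 : ℝ) ^ (-(n : ℤ))) ^ (-β) := by
        rw [Real.rpow_def_of_pos (by positivity), Real.log_zpow]
        push_cast
        ring_nf
    _ ≤ latticeSpacing n ζ ^ (-β) :=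
        Real.rpow_le_rpow_of_nonpos (latticeSpacing_pos hζ) hle (by linarith)

end Lattice

lemma exp_mul_max_neg_log_add_one_le {β d : ℝ} (hd : 0 < d) :
    Real.exp (β * max (-Real.log d + 1) 1) ≤ Real.exp β * (d ^ (-β) + 1) := by
  rcases le_total (-Real.log d) 0 with h | h
  · rw [max_eq_right (by linarith), mul_one]
    exact le_mul_of_one_le_right (Real.exp_nonneg _)
      (le_add_of_nonneg_left (Real.rpow_nonneg hd.le _))
  · rw [max_eq_left (by linarith), Real.rpow_def_of_pos hd, mul_add, mul_one, Real.exp_add,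
      mul_comm (Real.exp _) (Real.exp β), mul_neg, mul_comm β, ← mul_neg]
    exact mul_le_mul_of_nonneg_left (le_add_of_nonneg_right zero_le_one) (Real.exp_nonneg _)

lemma sum_product_sum_product_mul {ι κ R : Type*} [CommSemiring R] (s : Finset ι)
    (t : Finset κ) (F : ι → ι → R) (G : κ → κ → R) :
    ∑ p ∈ s ×ˢ t, ∑ p' ∈ s ×ˢ t, F p.1 p'.1 * G p.2 p'.2
      = (∑ i ∈ s, ∑ i' ∈ s, F i i') * ∑ j ∈ t, ∑ j' ∈ t, G j j' := by
  simp only [sum_product, sum_mul_sum]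

lemma integral_sum_sq_eq {Ω ι : Type*} [MeasurableSpace Ω] {μ : Measure Ω} (s : Finset ι)
    (f : ι → Ω → ℝ) (hf : ∀ i ∈ s, ∀ j ∈ s, Integrable (fun ω => f i ω * f j ω) μ) :
    ∫ ω, (∑ i ∈ s, f i ω) ^ 2 ∂μ = ∑ i ∈ s, ∑ j ∈ s, ∫ ω, f i ω * f j ω ∂μ := by
  simp_rw [sq, sum_mul_sum]
  rw [integral_finsetSum _ fun i hi => integrable_finsetSum _ (hf i hi)]
  exact sum_congr rfl fun i hi => integral_finsetSum _ (hf i hi)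

section Covariance

variable {β : ℝ} {n ζ : ℕ} {K : ℤ × ℤ → ℤ × ℤ → ℝ}

lemma exp_mul_cov_le (hβ : 0 ≤ β) (hζ : 0 < ζ)
    (hKdiag : ∀ q : ℤ × ℤ, K q q = n * Real.log 2)
    (hKoff : ∀ q q' : ℤ × ℤ, q ≠ q' → K q q' ≤ max (-Real.log (latticeDist n ζ q q') + 1) 1)
    (q q' : ℤ × ℤ) :
    Real.exp (β * K q q') ≤ Real.exp β * (latticeSpacing n ζ ^ (-β) *
      (powerKernel (β / 2) (q.1 - q'.1) * powerKernel (β / 2) (q.2 - q'.2)) + 1) := by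
  obtain rfl | hne := eq_or_ne q q'
  · rw [hKdiag, sub_self, sub_self, powerKernel_zero, mul_one, mul_one]
    calc Real.exp (β * (n * Real.log 2)) ≤ latticeSpacing n ζ ^ (-β) :=
          exp_mul_log_two_le_latticeSpacing_rpow hβ hζ
      _ ≤ latticeSpacing n ζ ^ (-β) + 1 := le_add_of_nonneg_right zero_le_one
      _ ≤ Real.exp β * (latticeSpacing n ζ ^ (-β) + 1) :=
          le_mul_of_one_le_left
            (by linarith [Real.rpow_nonneg (latticeSpacing_pos (n := n) hζ).le (-β)])
            (Real.one_le_exp hβ)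
  · calc Real.exp (β * K q q')
        ≤ Real.exp (β * max (-Real.log (latticeDist n ζ q q') + 1) 1) :=
          Real.exp_le_exp.2 (mul_le_mul_of_nonneg_left (hKoff q q' hne) hβ)
      _ ≤ Real.exp β * (latticeDist n ζ q q' ^ (-β) + 1) :=
          exp_mul_max_neg_log_add_one_le (latticeDist_pos hζ hne)
      _ ≤ _ := by
          gcongr
          exact latticeDist_rpow_neg_le hβ hζ hne

lemma sum_sum_exp_cov_le (hβ0 : 0 ≤ β) (hβ2 : β < 2) (hζ : 0 < ζ) {L : ℝ} (hL : 0 < L)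
    {a : ℝ × ℝ} {B : Finset (ℤ × ℤ)}
    (hB : B = latticeInterval (latticeSpacing n ζ) a.1 L ×ˢ
      latticeInterval (latticeSpacing n ζ) a.2 L)
    (hKdiag : ∀ q : ℤ × ℤ, K q q = n * Real.log 2)
    (hKoff : ∀ q q' : ℤ × ℤ, q ≠ q' → K q q' ≤ max (-Real.log (latticeDist n ζ q q') + 1) 1) :
    ∑ q ∈ B, ∑ q' ∈ B, Real.exp (β * K q q')
      ≤ Real.exp β * (4 * (1 + 2 / (1 - β / 2)) ^ 2 + 1) * max (L ^ (-β)) 1 * (#B : ℝ) ^ 2 := by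
  set ε := latticeSpacing n ζ
  set c := 1 + 2 / (1 - β / 2)
  set M := max (L ^ (-β)) 1
  set I₁ := latticeInterval ε a.1 L
  set I₂ := latticeInterval ε a.2 L
  have hε : 0 < ε := latticeSpacing_pos hζ
  have hc : 0 ≤ c := by
    have : 0 < 1 - β / 2 := by linarith
    positivity
  have hT₁ := rpow_neg_mul_sum_sum_powerKernel_le (α := β / 2) (by linarith) (by linarith) hε hL a.1
  have hT₂ := rpow_neg_mul_sum_sum_powerKernel_le (α := β / 2) (by linarith) (by linarith) hε hL a.2
  have hL2 : (L / 2) ^ (-β) ≤ 4 * M := by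
    have h2 : (2 : ℝ) ^ β ≤ 4 := by
      calc (2 : ℝ) ^ β ≤ 2 ^ (2 : ℝ) := Real.rpow_le_rpow_of_exponent_le one_le_two hβ2.le
        _ = 4 := by norm_num
    rw [Real.div_rpow hL.le zero_le_two, Real.rpow_neg zero_le_two, div_inv_eq_mul, mul_comm]
    exact mul_le_mul h2 (le_max_left _ _) (Real.rpow_nonneg hL.le _) (by norm_num)
  have hsum : ∑ q ∈ B, ∑ q' ∈ B, Real.exp β * (ε ^ (-β) *
        (powerKernel (β / 2) (q.1 - q'.1) * powerKernel (β / 2) (q.2 - q'.2)) + 1)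
      = Real.exp β * ((ε ^ (-(β / 2)) * ∑ j ∈ I₁, ∑ j' ∈ I₁, powerKernel (β / 2) (j - j')) *
        (ε ^ (-(β / 2)) * ∑ j ∈ I₂, ∑ j' ∈ I₂, powerKernel (β / 2) (j - j')) + (#B : ℝ) ^ 2) := by
    simp only [mul_add, mul_one, sum_add_distrib, ← mul_sum, sum_const, nsmul_eq_mul]
    rw [hB, sum_product_sum_product_mul I₁ I₂ (fun j j' => powerKernel (β / 2) (j - j'))
      (fun j j' => powerKernel (β / 2) (j - j')),
      show -β = -(β / 2) + -(β / 2) by ring, Real.rpow_add hε]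
    ring
  calc ∑ q ∈ B, ∑ q' ∈ B, Real.exp (β * K q q')
      ≤ ∑ q ∈ B, ∑ q' ∈ B, Real.exp β * (ε ^ (-β) *
          (powerKernel (β / 2) (q.1 - q'.1) * powerKernel (β / 2) (q.2 - q'.2)) + 1) :=
        sum_le_sum fun q _ => sum_le_sum fun q' _ => exp_mul_cov_le hβ0 hζ hKdiag hKoff q q'
    _ = _ := hsum
    _ ≤ Real.exp β * ((c * (L / 2) ^ (-(β / 2)) * (#I₁ : ℝ) ^ 2) *
          (c * (L / 2) ^ (-(β / 2)) * (#I₂ : ℝ) ^ 2) + (#B : ℝ) ^ 2) := by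
        refine mul_le_mul_of_nonneg_left (add_le_add_left ?_ _) (Real.exp_nonneg β)
        exact mul_le_mul hT₁ hT₂
          (mul_nonneg (Real.rpow_nonneg hε.le _) (sum_nonneg fun _ _ => sum_nonneg fun _ _ =>
            powerKernel_nonneg _ _))
          (by positivity)
    _ = Real.exp β * (c ^ 2 * (L / 2) ^ (-β) * (#B : ℝ) ^ 2 + (#B : ℝ) ^ 2) := by
        rw [hB, card_product, show -β = -(β / 2) + -(β / 2) by ring, Real.rpow_add (by positivity)]
        push_cast
        ring
    _ ≤ Real.exp β * (c ^ 2 * (4 * M) * (#B : ℝ) ^ 2 + M * (#B : ℝ) ^ 2) := by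
        gcongr
        exact le_mul_of_one_le_left (by positivity) (le_max_right _ _)
    _ = Real.exp β * (4 * c ^ 2 + 1) * M * (#B : ℝ) ^ 2 := by ring

end Covariance

/-- **Second moment bound for the normalized LQG measure**: for `0 < γ < √2`
there is a constant `C = C(γ)` such that for every integer `m` and every box
`B` of side length `2^m` in `ℤ_n²`, the mass `η_n(B) = ∑_{y ∈ B} e^{γ φ_n(y)}`
of the regularized GFF `φ_n` (a centered Gaussian field with pointwise variance
`n log 2` and covariance `K` bounded by `max(−log|y−y'| + 1, 1)` off the
diagonal) satisfies `E[η̃_n(B)²] ≤ C · max(2^{−γ² m}, 1)`, where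
`η̃_n(B) = η_n(B) / E[η_n(B)]` and `E[η_n(B)] = 2^{γ² n/2} |B|`. -/
theorem normalized_LQG_second_moment (γ : ℝ) (hγ0 : 0 < γ) (hγ : γ < Real.sqrt 2) :
    ∃ C : ℝ, 0 < C ∧
      ∀ (n ζ : ℕ), 0 < ζ →
      ∀ (m : ℤ) (a : ℝ × ℝ) (B : Finset (ℤ × ℤ)),
        (∀ q : ℤ × ℤ, q ∈ B ↔
          ((latticePos n ζ q).1 ∈ Set.Icc a.1 (a.1 + (2 : ℝ) ^ m) ∧
           (latticePos n ζ q).2 ∈ Set.Icc a.2 (a.2 + (2 : ℝ) ^ m))) →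
      ∀ (Ω : Type) (_ : MeasurableSpace Ω) (μ : Measure Ω), IsProbabilityMeasure μ →
      ∀ (φ : Ω → (ℤ × ℤ) → ℝ) (K : (ℤ × ℤ) → (ℤ × ℤ) → ℝ),
        (∀ q : ℤ × ℤ, Measurable fun ω => φ ω q) →
        (∀ q : ℤ × ℤ, K q q = (n : ℝ) * Real.log 2) →
        (∀ q q' : ℤ × ℤ, q ≠ q' →
          K q q' ≤ max (-Real.log (latticeDist n ζ q q') + 1) 1) →
        (∀ q ∈ B, ∀ q' ∈ B,
          ∫ ω, Real.exp (γ * (φ ω q + φ ω q')) ∂μ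
            = Real.exp ((γ ^ 2 / 2) * (2 * (n : ℝ) * Real.log 2 + 2 * K q q'))) →
        ∫ ω, (∑ q ∈ B, Real.exp (γ * φ ω q)) ^ 2 ∂μ
          ≤ C * max ((2 : ℝ) ^ (-(γ ^ 2) * (m : ℝ))) 1 *
              ((2 : ℝ) ^ (γ ^ 2 * (n : ℝ) / 2) * (B.card : ℝ)) ^ 2 := by
  have hγ2 : γ ^ 2 < 2 := by simpa using (Real.lt_sqrt hγ0.le).1 hγ
  refine ⟨Real.exp (γ ^ 2) * (4 * (1 + 2 / (1 - γ ^ 2 / 2)) ^ 2 + 1), by positivity, ?_⟩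
  intro n ζ hζ m a B hB Ω _ μ _ φ K _ hKdiag hKoff hmom
  have hmom' : ∀ q ∈ B, ∀ q' ∈ B, ∫ ω, Real.exp (γ * φ ω q) * Real.exp (γ * φ ω q') ∂μ
      = (2 : ℝ) ^ (γ ^ 2 * n) * Real.exp (γ ^ 2 * K q q') := fun q hq q' hq' => by
    simp_rw [← Real.exp_add, ← mul_add]
    rw [hmom q hq q' hq', Real.rpow_def_of_pos two_pos, ← Real.exp_add]
    ring_nf
  have hcore := sum_sum_exp_cov_le (pow_pos hγ0 2).le hγ2 hζ (zpow_pos two_pos m)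
    (eq_latticeInterval_prod hζ hB) hKdiag hKoff
  calc ∫ ω, (∑ q ∈ B, Real.exp (γ * φ ω q)) ^ 2 ∂μ
      = ∑ q ∈ B, ∑ q' ∈ B, ∫ ω, Real.exp (γ * φ ω q) * Real.exp (γ * φ ω q') ∂μ :=
        integral_sum_sq_eq B _ fun q hq q' hq' =>
          Integrable.of_integral_ne_zero (by rw [hmom' q hq q' hq']; positivity)
    _ = (2 : ℝ) ^ (γ ^ 2 * n) * ∑ q ∈ B, ∑ q' ∈ B, Real.exp (γ ^ 2 * K q q') := by
        rw [mul_sum]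
        exact sum_congr rfl fun q hq => by
          rw [mul_sum]; exact sum_congr rfl fun q' hq' => hmom' q hq q' hq'
    _ ≤ (2 : ℝ) ^ (γ ^ 2 * n) * (Real.exp (γ ^ 2) * (4 * (1 + 2 / (1 - γ ^ 2 / 2)) ^ 2 + 1) *
          max (((2 : ℝ) ^ m) ^ (-γ ^ 2)) 1 * (#B : ℝ) ^ 2) := by gcongr
    _ = _ := by
        have h2n : ((2 : ℝ) ^ (γ ^ 2 * n / 2)) ^ 2 = 2 ^ (γ ^ 2 * n) := by
          rw [← Real.rpow_natCast, ← Real.rpow_mul zero_le_two]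
          ring_nf
        have h2m : ((2 : ℝ) ^ m) ^ (-γ ^ 2) = 2 ^ (-γ ^ 2 * m) := by
          rw [← Real.rpow_intCast, ← Real.rpow_mul zero_le_two, mul_comm]
        rw [h2m, mul_pow, h2n]
        ring
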